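/- arXiv:1611.04676 — 3 statements merged into one kernel-verified Lean document; each statement's English description precedes it below -/
import Mathlib

section
/- The Goldman Lie algebra of the torus over ℤ is not finitely generated as a Lie algebra over ℤ. More precisely, for every finite subset S of ℤ[ℤ²], the Lie subring generated by S is a proper subset of ℤ[ℤ²]. -/
/-! The coefficient of `e (a, b)` in any bracket `gb x y` is divisible by `gcd a b`, since for
`p + r = (a, b)` one has `p.1 * r.2 - p.2 * r.1 = p.1 * b - p.2 * a`. Hence, for `n ≥ 2`, the
elements whose `e (n, 0)`-coefficient is divisible by `n` form a proper Lie subring; it contains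
every element of a given finite set once `(n, 0)` lies outside all their supports. -/

noncomputable def gb (x y : (ℤ × ℤ) →₀ ℤ) : (ℤ × ℤ) →₀ ℤ :=
  x.sum fun p a => y.sum fun q b =>
    Finsupp.single (p.1 + q.1, p.2 + q.2) (a * b * (p.1 * q.2 - p.2 * q.1))

noncomputable def e (p : ℤ × ℤ) : (ℤ × ℤ) →₀ ℤ := Finsupp.single p 1

theorem dvd_gb_apply {d : ℤ} {v : ℤ × ℤ} (h₁ : d ∣ v.1) (h₂ : d ∣ v.2) (x y : (ℤ × ℤ) →₀ ℤ) :
    d ∣ gb x y v := by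
  simp only [gb, Finsupp.sum_apply, Finsupp.single_apply]
  refine Finset.dvd_sum fun p _ => Finset.dvd_sum fun r _ => ?_
  dsimp only
  split_ifs with h
  · subst h
    have hcoeff : p.1 * r.2 - p.2 * r.1 = p.1 * (p.2 + r.2) - p.2 * (p.1 + r.1) := by ring
    rw [hcoeff]
    exact dvd_mul_of_dvd_right (dvd_sub (dvd_mul_of_dvd_right h₂ _) (dvd_mul_of_dvd_right h₁ _)) _
  · exact dvd_zero d

section CoeffDvd

variable {α R : Type*} [CommRing R]

noncomputable def coeffDvdSubmodule (a : α) (d : R) : Submodule R (α →₀ R) :=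
  Submodule.comap (Finsupp.lapply a) (Ideal.span {d})

theorem mem_coeffDvdSubmodule {a : α} {d : R} {x : α →₀ R} :
    x ∈ coeffDvdSubmodule a d ↔ d ∣ x a := by
  simp [coeffDvdSubmodule, Ideal.mem_span_singleton]

theorem coeffDvdSubmodule_ne_top {a : α} {d : R} (hd : ¬IsUnit d) :
    coeffDvdSubmodule a d ≠ ⊤ := by
  intro htop
  have hsingle : Finsupp.single a 1 ∈ coeffDvdSubmodule a d := htop ▸ Submodule.mem_top
  rw [mem_coeffDvdSubmodule, Finsupp.single_eq_same] at hsingle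
  exact hd (isUnit_of_dvd_one hsingle)

end CoeffDvd

theorem Finset.exists_mem_forall_apply_eq_zero {α M : Type*} [Zero M] (S : Finset (α →₀ M))
    {A : Set α} (hA : A.Infinite) : ∃ a ∈ A, ∀ s ∈ S, s a = 0 := by
  classical
  obtain ⟨a, haA, ha⟩ := hA.exists_notMem_finset (S.biUnion Finsupp.support)
  exact ⟨a, haA, fun s hs => Finsupp.notMem_support_iff.mp fun h => ha (mem_biUnion.mpr ⟨s, hs, h⟩)⟩

theorem goldman_not_fg_int (S : Finset ((ℤ × ℤ) →₀ ℤ)) :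
    ∃ P : Submodule ℤ ((ℤ × ℤ) →₀ ℤ),
      (∀ s ∈ S, s ∈ P) ∧ (∀ x ∈ P, ∀ y ∈ P, gb x y ∈ P) ∧ P ≠ ⊤ := by
  have hA : ((fun n : ℤ => (n, (0 : ℤ))) '' Set.Ici 2).Infinite :=
    (Set.Ici_infinite 2).image fun _ _ _ _ h => congrArg Prod.fst h
  obtain ⟨_, ⟨n, hn, rfl⟩, hS⟩ := S.exists_mem_forall_apply_eq_zero hA
  refine ⟨coeffDvdSubmodule (n, 0) n, fun s hs => ?_, fun x _ y _ => ?_, ?_⟩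
  · rw [mem_coeffDvdSubmodule, hS s hs]
    exact dvd_zero n
  · exact mem_coeffDvdSubmodule.mpr (dvd_gb_apply dvd_rfl (dvd_zero n) x y)
  · refine coeffDvdSubmodule_ne_top fun hunit => ?_
    have := Int.isUnit_iff.mp hunit
    grind
end

section
/- In the Goldman Lie algebra of the torus over ℤ, for every integer n > 2 the element (n-1)·e_{(n,0)} does not lie in the span of brackets; equivalently, if a finite sum Σ_s ε_s [e_{(i_s,j_s)}, e_{(k_s,l_s)}] with ε_s = ±1 equals m·e_{(n,0)}, then n divides m, so it cannot equal (n-1)·e_{(n,0)}. -/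
/-! Only brackets landing on `(n, 0)` contribute to the coefficient of `e (n, 0)`, and for such a
bracket the coefficient `p.1 q.2 - p.2 q.1` equals `-p.2 n`. Hence `n` divides the coefficient of
`e (n, 0)` in every integer combination of brackets, while `n ∤ n - 1` once `n > 2`. -/

lemma gb_e (p q : ℤ × ℤ) :
    gb (e p) (e q) = Finsupp.single (p.1 + q.1, p.2 + q.2) (p.1 * q.2 - p.2 * q.1) := by
  unfold gb e
  rw [Finsupp.sum_single_index, Finsupp.sum_single_index, one_mul, one_mul] <;> simp

lemma dvd_gb_e_apply (n : ℤ) (p q : ℤ × ℤ) : n ∣ gb (e p) (e q) (n, 0) := by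
  rw [gb_e, Finsupp.single_apply]
  split_ifs with hpq
  · obtain ⟨h1, h2⟩ := Prod.ext_iff.mp hpq
    exact ⟨-p.2, by linear_combination (-p.2) * h1 + p.1 * h2⟩
  · exact dvd_zero n

lemma dvd_sum_smul_gb_e_apply {ι : Type*} (s : Finset ι) (c : ι → ℤ) (p q : ι → ℤ × ℤ) (n : ℤ) :
    n ∣ (∑ i ∈ s, c i • gb (e (p i)) (e (q i))) (n, 0) := by
  rw [Finsupp.finsetSum_apply]
  exact Finset.dvd_sum fun i _ => (dvd_gb_e_apply n (p i) (q i)).mul_left (c i)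

lemma smul_e_injective (a : ℤ × ℤ) : Function.Injective fun m : ℤ => m • e a := by
  intro m m' h
  simp only [e, Finsupp.smul_single_one] at h
  exact Finsupp.single_injective a h

theorem goldman_div_general (n : ℤ) (hn : 2 < n) (t : ℕ) (ε : Fin t → ℤ)
    (p q : Fin t → ℤ × ℤ) (m : ℤ)
    (h : ∑ s, ε s • gb (e (p s)) (e (q s)) = m • e (n, 0)) :
    n ∣ m ∧ ∑ s, ε s • gb (e (p s)) (e (q s)) ≠ (n - 1) • e (n, 0) := by
  have hm : n ∣ m := by
    have := dvd_sum_smul_gb_e_apply Finset.univ ε p q n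
    rwa [h, e, Finsupp.smul_single_one, Finsupp.single_eq_same] at this
  refine ⟨hm, fun h' => ?_⟩
  have hm' : m = n - 1 := smul_e_injective (n, 0) (h.symm.trans h')
  have h1 : n ∣ 1 := dvd_sub_self_left.mp (hm' ▸ hm)
  have := Int.le_of_dvd one_pos h1
  omega

theorem goldman_div (n : ℤ) (hn : 2 < n) (t : ℕ) (ε : Fin t → ℤ)
    (hε : ∀ s, ε s = 1 ∨ ε s = -1) (p q : Fin t → ℤ × ℤ) (m : ℤ)
    (h : ∑ s, ε s • gb (e (p s)) (e (q s)) = m • e (n, 0)) :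
    n ∣ m ∧ ∑ s, ε s • gb (e (p s)) (e (q s)) ≠ (n - 1) • e (n, 0) :=
  goldman_div_general n hn t ε p q m h
end

section
/- The derived Lie algebra [G,G] of the Goldman Lie algebra G of the torus over ℤ equals the ℤ-submodule spanned by the elements gcd(i,j)·e_{(i,j)} for all (i,j) ∈ ℤ² with (i,j) ≠ (0,0). -/
/-!
Every bracket `[e_p, e_q] = (p₁q₂ - p₂q₁) e_{p+q}` has a coefficient divisible by
`gcd (p + q)`, because `p₁q₂ - p₂q₁ = p₁(p+q)₂ - p₂(p+q)₁`; this gives `[G,G] ⊆ span`.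
Conversely, for `r ≠ 0` pick Bézout coefficients `a r₁ + b r₂ = gcd r`; with `u = (b, -a)`,
`[e_u, e_{r-u}] = (u₁r₂ - u₂r₁) e_r = gcd r • e_r`.
-/

noncomputable def gcdLattice : Submodule ℤ ((ℤ × ℤ) →₀ ℤ) :=
  Submodule.span ℤ {z | ∃ p : ℤ × ℤ, p ≠ 0 ∧ z = (Int.gcd p.1 p.2 : ℤ) • e p}

lemma gb_e_e (p q : ℤ × ℤ) :
    gb (e p) (e q) = Finsupp.single (p + q) (p.1 * q.2 - p.2 * q.1) := by
  rw [gb, e, e, Finsupp.sum_single_index (by simp), Finsupp.sum_single_index (by simp)]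
  simp only [one_mul]
  rfl

lemma gcd_dvd_cross_add (p q : ℤ × ℤ) :
    (Int.gcd (p + q).1 (p + q).2 : ℤ) ∣ p.1 * q.2 - p.2 * q.1 := by
  have hcross : p.1 * q.2 - p.2 * q.1 = p.1 * (p + q).2 - p.2 * (p + q).1 := by
    simp only [Prod.fst_add, Prod.snd_add]; ring
  rw [hcross]
  exact ((Int.gcd_dvd_right _ _).mul_left _).sub ((Int.gcd_dvd_left _ _).mul_left _)

lemma single_mem_gcdLattice {r : ℤ × ℤ} {c : ℤ} (hc : (Int.gcd r.1 r.2 : ℤ) ∣ c) :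
    Finsupp.single r c ∈ gcdLattice := by
  obtain ⟨k, rfl⟩ := hc
  by_cases hr : r = 0
  · simp [hr]
  · have hsingle : Finsupp.single r ((Int.gcd r.1 r.2 : ℤ) * k) =
        k • ((Int.gcd r.1 r.2 : ℤ) • e r) := by
      rw [e, Finsupp.smul_single, Finsupp.smul_single, smul_eq_mul, smul_eq_mul, mul_one,
        mul_comm]
    rw [hsingle]
    exact Submodule.smul_mem _ _ (Submodule.subset_span ⟨r, hr, rfl⟩)

lemma gb_mem_gcdLattice (x y : (ℤ × ℤ) →₀ ℤ) : gb x y ∈ gcdLattice :=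
  Submodule.sum_mem _ fun p _ => Submodule.sum_mem _ fun q _ =>
    single_mem_gcdLattice ((gcd_dvd_cross_add p q).mul_left _)

lemma gcd_smul_e_eq_gb (r : ℤ × ℤ) :
    (Int.gcd r.1 r.2 : ℤ) • e r =
      gb (e (Int.gcdB r.1 r.2, -Int.gcdA r.1 r.2))
        (e (r - (Int.gcdB r.1 r.2, -Int.gcdA r.1 r.2))) := by
  rw [gb_e_e, add_sub_cancel, e, Finsupp.smul_single, smul_eq_mul, mul_one,
    Int.gcd_eq_gcd_ab]
  congr 1
  simp only [Prod.fst_sub, Prod.snd_sub]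
  ring

theorem goldman_derived :
    Submodule.span ℤ {z : (ℤ × ℤ) →₀ ℤ | ∃ x y, z = gb x y} =
    Submodule.span ℤ {z : (ℤ × ℤ) →₀ ℤ |
      ∃ p : ℤ × ℤ, p ≠ 0 ∧ z = (Int.gcd p.1 p.2 : ℤ) • e p} := by
  apply le_antisymm
  · rw [Submodule.span_le]
    rintro _ ⟨x, y, rfl⟩
    exact gb_mem_gcdLattice x y
  · rw [Submodule.span_le]
    rintro _ ⟨r, -, rfl⟩
    exact Submodule.subset_span ⟨_, _, gcd_smul_e_eq_gb r⟩
end
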